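/- The constructive interpretation of an epistemically guarded transition system is monotone: if Γ = (S,E,L,S₀,𝒯) is an epistemically guarded transition system and Y ⊑ Y' are must/can structures over (S,E,L,S₀), then ⟦Γ⟧Y ⊑ ⟦Γ⟧Y'. -/
import Mathlib


namespace KBP

/-- `k`-step reachable states of a transition system with initial states `S0`. -/
def RSk {S : Type} (S0 : Set S) (T : Set (S × S)) : ℕ → Set S
  | 0 => S0
  | k + 1 => RSk S0 T k ∪ {s' | ∃ s ∈ RSk S0 T k, (s, s') ∈ T}

/-- All reachable states. -/
def Reach {S : Type} (S0 : Set S) (T : Set (S × S)) : Set S := ⋃ k, RSk S0 T k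

/-- Epistemic formulas (with the abbreviations `true`, `∨`, `M` as primitives). -/
inductive EFrm (P A : Type) : Type
  | prop : P → EFrm P A
  | nprop : P → EFrm P A
  | fls : EFrm P A
  | tru : EFrm P A
  | neg : EFrm P A → EFrm P A
  | and : EFrm P A → EFrm P A → EFrm P A
  | or : EFrm P A → EFrm P A → EFrm P A
  | K : A → EFrm P A → EFrm P A
  | M : A → EFrm P A → EFrm P A

/-- Positive and negative satisfaction over a must/can structure, as a pair. -/
def psns (E : A → Set (S × S)) (L : S → Set P) (S0 : Set S)
    (Tμ Tν : Set (S × S)) : EFrm P A → (S → Prop) × (S → Prop)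
  | .prop p => (fun s => p ∈ L s, fun s => p ∉ L s)
  | .nprop p => (fun s => p ∉ L s, fun s => p ∈ L s)
  | .fls => (fun _ => False, fun _ => True)
  | .tru => (fun _ => True, fun _ => False)
  | .neg φ => ((psns E L S0 Tμ Tν φ).2, (psns E L S0 Tμ Tν φ).1)
  | .and φ ψ =>
      (fun s => (psns E L S0 Tμ Tν φ).1 s ∧ (psns E L S0 Tμ Tν ψ).1 s,
       fun s => (psns E L S0 Tμ Tν φ).2 s ∨ (psns E L S0 Tμ Tν ψ).2 s)
  | .or φ ψ =>
      (fun s => (psns E L S0 Tμ Tν φ).1 s ∨ (psns E L S0 Tμ Tν ψ).1 s,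
       fun s => (psns E L S0 Tμ Tν φ).2 s ∧ (psns E L S0 Tμ Tν ψ).2 s)
  | .K a φ =>
      (fun s => ∀ s' ∈ Reach S0 Tν, (s, s') ∈ E a → (psns E L S0 Tμ Tν φ).1 s',
       fun s => ∃ s' ∈ Reach S0 Tμ, (s, s') ∈ E a ∧ (psns E L S0 Tμ Tν φ).2 s')
  | .M a φ =>
      (fun s => ∃ s' ∈ Reach S0 Tμ, (s, s') ∈ E a ∧ (psns E L S0 Tμ Tν φ).1 s',
       fun s => ∀ s' ∈ Reach S0 Tν, (s, s') ∈ E a → (psns E L S0 Tμ Tν φ).2 s')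

/-- Positive satisfaction `Y, s ⊨ₚ φ`. -/
def psat (E : A → Set (S × S)) (L : S → Set P) (S0 : Set S)
    (Tμ Tν : Set (S × S)) (s : S) (φ : EFrm P A) : Prop :=
  (psns E L S0 Tμ Tν φ).1 s

/-- Negative satisfaction `Y, s ⊨ₙ φ`. -/
def nsat (E : A → Set (S × S)) (L : S → Set P) (S0 : Set S)
    (Tμ Tν : Set (S × S)) (s : S) (φ : EFrm P A) : Prop :=
  (psns E L S0 Tμ Tν φ).2 s

/-- Lower part of the constructive interpretation. -/
def interpMu (E : A → Set (S × S)) (L : S → Set P) (S0 : Set S)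
    (Γ : Set (EFrm P A × Set (S × S))) (Tμ Tν : Set (S × S)) : Set (S × S) :=
  {p | ∃ g ∈ Γ, p ∈ g.2 ∧ p.1 ∈ Reach S0 Tμ ∧ psat E L S0 Tμ Tν p.1 g.1}

/-- Upper part of the constructive interpretation. -/
def interpNu (E : A → Set (S × S)) (L : S → Set P) (S0 : Set S)
    (Γ : Set (EFrm P A × Set (S × S))) (Tμ Tν : Set (S × S)) : Set (S × S) :=
  {p | ∃ g ∈ Γ, p ∈ g.2 ∧ p.1 ∈ Reach S0 Tν ∧ ¬ nsat E L S0 Tμ Tν p.1 g.1}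


lemma RSk_mono {S : Type} (S0 : Set S) {T T' : Set (S × S)} (h : T ⊆ T') :
    ∀ k, RSk S0 T k ⊆ RSk S0 T' k := by
  intro k
  induction k with
  | zero => exact subset_rfl
  | succ k ih =>
    intro s hs
    rcases hs with hs | ⟨t, ht, htr⟩
    · exact Or.inl (ih hs)
    · exact Or.inr ⟨t, ih ht, h htr⟩

lemma Reach_mono {S : Type} (S0 : Set S) {T T' : Set (S × S)} (h : T ⊆ T') :
    Reach S0 T ⊆ Reach S0 T' := by
  intro s hs
  rcases Set.mem_iUnion.1 hs with ⟨k, hk⟩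
  exact Set.mem_iUnion.2 ⟨k, RSk_mono S0 h k hk⟩

lemma psns_mono {S P A : Type} (E : A → Set (S × S)) (L : S → Set P) (S0 : Set S)
    {Tμ Tν Tμ' Tν' : Set (S × S)} (hlo : Tμ ⊆ Tμ') (hup : Tν' ⊆ Tν)
    (φ : EFrm P A) :
    (∀ s, (psns E L S0 Tμ Tν φ).1 s → (psns E L S0 Tμ' Tν' φ).1 s) ∧
    (∀ s, (psns E L S0 Tμ Tν φ).2 s → (psns E L S0 Tμ' Tν' φ).2 s) := by
  induction φ with
  | prop p => exact ⟨fun s h => h, fun s h => h⟩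
  | nprop p => exact ⟨fun s h => h, fun s h => h⟩
  | fls => exact ⟨fun s h => h, fun s h => h⟩
  | tru => exact ⟨fun s h => h, fun s h => h⟩
  | neg φ ih => exact ⟨fun s h => ih.2 s h, fun s h => ih.1 s h⟩
  | and φ ψ ihφ ihψ =>
    exact ⟨fun s h => ⟨ihφ.1 s h.1, ihψ.1 s h.2⟩,
           fun s h => h.elim (fun h => Or.inl (ihφ.2 s h)) (fun h => Or.inr (ihψ.2 s h))⟩
  | or φ ψ ihφ ihψ =>
    exact ⟨fun s h => h.elim (fun h => Or.inl (ihφ.1 s h)) (fun h => Or.inr (ihψ.1 s h)),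
           fun s h => ⟨ihφ.2 s h.1, ihψ.2 s h.2⟩⟩
  | K a φ ih =>
    refine ⟨fun s h s' hs' he => ih.1 s' (h s' (Reach_mono S0 hup hs') he), ?_⟩
    rintro s ⟨s', hs', he, hφ⟩
    exact ⟨s', Reach_mono S0 hlo hs', he, ih.2 s' hφ⟩
  | M a φ ih =>
    refine ⟨?_, fun s h s' hs' he => ih.2 s' (h s' (Reach_mono S0 hup hs') he)⟩
    rintro s ⟨s', hs', he, hφ⟩
    exact ⟨s', Reach_mono S0 hlo hs', he, ih.1 s' hφ⟩

/-- The constructive interpretation of an epistemically guarded transition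
system is monotone w.r.t. the extension order on must/can structures. -/
theorem constructive_interpretation_monotone {S P A : Type}
    (E : A → Set (S × S)) (L : S → Set P) (S0 : Set S)
    (Γ : Set (EFrm P A × Set (S × S))) (Tμ Tν Tμ' Tν' : Set (S × S))
    (h : Tμ ⊆ Tν) (h' : Tμ' ⊆ Tν') (hlo : Tμ ⊆ Tμ') (hup : Tν' ⊆ Tν) :
    interpMu E L S0 Γ Tμ Tν ⊆ interpMu E L S0 Γ Tμ' Tν' ∧
    interpNu E L S0 Γ Tμ' Tν' ⊆ interpNu E L S0 Γ Tμ Tν := by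
  constructor
  · rintro ⟨x, y⟩ ⟨g, hg, hB, hr, hp⟩
    exact ⟨g, hg, hB, Reach_mono S0 hlo hr,
      (psns_mono E L S0 hlo hup g.1).1 x hp⟩
  · rintro ⟨x, y⟩ ⟨g, hg, hB, hr, hn⟩
    exact ⟨g, hg, hB, Reach_mono S0 hup hr,
      fun hc => hn ((psns_mono E L S0 hlo hup g.1).2 x hc)⟩

end KBP
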